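/- arXiv:1904.04936 — 7 statements merged into one kernel-verified Lean document; each statement's English description precedes it below -/
import Mathlib

section
/- Let (X, μ) be a probability space, T : X → X a measurable map, and (B_n) a sequence of measurable sets with μ(B_n) > 0 for every n. For k ≥ 0 and n define θ_k^{(n)} = μ(B_n ∩ ⋂_{i=1}^{k} T^{-i}(B_nᶜ))/μ(B_n) (so θ_0^{(n)} = 1) and q_k^{(n)} = μ(B_n ∩ ⋂_{i=1}^{k} T^{-i}(B_nᶜ) ∩ T^{-(k+1)}(B_n))/μ(B_n). Suppose that for every k ≥ 0 the limit q_k := lim_{n→∞} q_k^{(n)} exists. Then: (i) for every k ≥ 0 the limit θ_k := lim_{n→∞} θ_k^{(n)} exists and equals 1 − Σ_{j=0}^{k−1} q_j; (ii) the series Σ_{k=0}^{∞} q_k converges; and (iii) lim_{k→∞} θ_k = 1 − Σ_{k=0}^{∞} q_k. (Generalized O'Brien formula: the spectral-formula value 1 − Σ q_k of the extremal index equals the double limit lim_{k→∞} lim_{n→∞} θ_k^{(n)}.) -/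
/-!
Let `A_k = B ∩ ⋂_{i=1}^k T^{-i} Bᶜ` be the points of `B` avoiding `B` for `k` steps. Then
`A_{k+1} = A_k \ T^{-(k+1)} B`, so `μ(A_k) = μ(A_{k+1}) + μ(A_k ∩ T^{-(k+1)} B)`; telescoping
gives the exact identity `θ_k^{(n)} = 1 - Σ_{j<k} q_j^{(n)}` for every `n`, and (i) follows by
passing to the limit in a finite sum. Since `θ_k^{(n)} ≥ 0`, the partial sums of the nonnegative
`q_j^{(n)}` are at most `1`, hence so are those of the limits `q_j`, which gives (ii); (iii) is
then the convergence of the partial sums.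
-/

open MeasureTheory Set Filter

section

variable {X : Type*}

def avoidSet (T : X → X) (B : Set X) (k : ℕ) : Set X :=
  B ∩ ⋂ i ∈ Finset.Icc 1 k, T^[i] ⁻¹' Bᶜ

theorem avoidSet_zero (T : X → X) (B : Set X) : avoidSet T B 0 = B := by
  simp [avoidSet]

theorem avoidSet_succ (T : X → X) (B : Set X) (k : ℕ) :
    avoidSet T B (k + 1) = avoidSet T B k \ T^[k + 1] ⁻¹' B := by
  rw [avoidSet, ← Finset.insert_Icc_right_eq_Icc_add_one (Nat.succ_le_succ k.zero_le),
    Finset.set_biInter_insert, avoidSet, sdiff_eq, preimage_compl]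
  ac_rfl

theorem MeasureTheory.measureReal_avoidSet_add_sum [MeasurableSpace X] {μ : Measure X}
    {T : X → X} (hT : Measurable T) {B : Set X} (hB : MeasurableSet B) (hμB : μ B ≠ ⊤)
    (k : ℕ) :
    μ.real (avoidSet T B k)
      + ∑ j ∈ Finset.range k, μ.real (avoidSet T B j ∩ T^[j + 1] ⁻¹' B) = μ.real B := by
  induction k with
  | zero => simp [avoidSet_zero]
  | succ k ih =>
    have hfin : μ (avoidSet T B k) ≠ ⊤ := measure_ne_top_of_subset inter_subset_left hμB
    rw [← ih, Finset.sum_range_succ, avoidSet_succ,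
      ← measureReal_inter_add_sdiff ((hT.iterate (k + 1)) hB) hfin]
    ring

end

theorem summable_of_tendsto_of_sum_range_le {a : ℕ → ℕ → ℝ} {q : ℕ → ℝ} {c : ℝ}
    (ha : ∀ j n, 0 ≤ a j n) (hsum : ∀ k n, ∑ j ∈ Finset.range k, a j n ≤ c)
    (hlim : ∀ j, Tendsto (a j) atTop (nhds (q j))) : Summable q :=
  summable_of_sum_range_le (fun j => ge_of_tendsto' (hlim j) (ha j))
    fun k => le_of_tendsto' (tendsto_finsetSum _ fun j _ => hlim j) (hsum k)

/-- Generalized O'Brien formula. If all the finite-resolution cluster coefficients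
`q_k^{(n)}` converge as `n → ∞`, then each `θ_k^{(n)}` converges to `1 − Σ_{j<k} q_j`,
the series `Σ q_k` converges, and `lim_k θ_k = 1 − Σ_{k} q_k`. -/
theorem stmt1 {X : Type*} [MeasurableSpace X] (μ : Measure X) [IsProbabilityMeasure μ]
    (T : X → X) (hT : Measurable T)
    (B : ℕ → Set X) (hBmeas : ∀ n, MeasurableSet (B n)) (hBpos : ∀ n, 0 < μ (B n))
    (θ : ℕ → ℕ → ℝ)
    (hθ : ∀ k n, θ k n
      = (μ (B n ∩ ⋂ i ∈ Finset.Icc 1 k, (T^[i]) ⁻¹' (B n)ᶜ)).toReal / (μ (B n)).toReal)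
    (qn : ℕ → ℕ → ℝ)
    (hqn : ∀ k n, qn k n
      = (μ (B n ∩ (⋂ i ∈ Finset.Icc 1 k, (T^[i]) ⁻¹' (B n)ᶜ)
          ∩ (T^[k+1]) ⁻¹' (B n))).toReal / (μ (B n)).toReal)
    (q : ℕ → ℝ)
    (hlim : ∀ k, Tendsto (fun n => qn k n) atTop (nhds (q k))) :
    (∀ k, Tendsto (fun n => θ k n) atTop (nhds (1 - ∑ j ∈ Finset.range k, q j))) ∧
    Summable q ∧
    Tendsto (fun k => 1 - ∑ j ∈ Finset.range k, q j) atTop (nhds (1 - ∑' k, q k)) := by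
  have hθ_eq : ∀ k n, θ k n = 1 - ∑ j ∈ Finset.range k, qn j n := by
    intro k n
    have hB : (μ (B n)).toReal ≠ 0 :=
      ENNReal.toReal_ne_zero.mpr ⟨(hBpos n).ne', measure_ne_top μ _⟩
    simp only [hθ, hqn, ← Finset.sum_div]
    rw [eq_sub_iff_add_eq, ← add_div, div_eq_one_iff_eq hB]
    exact measureReal_avoidSet_add_sum hT (hBmeas n) (measure_ne_top μ _) k
  have hθ_lim (k : ℕ) :
      Tendsto (fun n => θ k n) atTop (nhds (1 - ∑ j ∈ Finset.range k, q j)) := by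
    simpa only [hθ_eq] using (tendsto_finsetSum _ fun j _ => hlim j).const_sub 1
  have hq_summable : Summable q := by
    refine summable_of_tendsto_of_sum_range_le (c := 1) (fun j n => ?_) (fun k n => ?_) hlim
    · rw [hqn]; positivity
    · have : 0 ≤ θ k n := by rw [hθ]; positivity
      linarith [hθ_eq k n]
  exact ⟨hθ_lim, hq_summable, hq_summable.hasSum.tendsto_sum_nat.const_sub 1⟩
end

section
/- Work on the circle 𝕋 = ℝ/ℤ with its quotient metric d, Lebesgue (Haar) measure λ, and open balls B(z,r). Let h : 𝕋 → ℝ be measurable with 0 < ι ≤ h(x) ≤ H for all x, let μ = h·λ, let T : 𝕋 → 𝕋 be continuous, let f : 𝕋 → 𝕋 be continuous, and let ν be a Borel probability measure on 𝕋. Fix k ≥ 0 and assume ν({z : T^{k+1}(z) = f^{k+1}(z)}) = 0. Let (r_n) be a decreasing sequence with 0 < r_n < 1/2 and r_n → 0. Then the ratio [∫ μ( B(z,r_n) ∩ ⋂_{j=1}^{k} T^{-j}(B(f^{j}(z), r_n))ᶜ ∩ T^{-(k+1)}(B(f^{k+1}(z), r_n)) ) dν(z)] / [∫ μ(B(z,r_n))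 dν(z)] tends to 0 as n → ∞. (Hence every cluster coefficient q_k vanishes and the extremal index of the moving-target process equals 1.) -/
open MeasureTheory Set Filter Metric Topology
open scoped ENNReal

/-! A point of `B(z, r)` whose `T^{k+1}`-image lies in `B(f^{k+1} z, r)` can exist for arbitrarily
small `r` only if `T^{k+1} z = f^{k+1} z`, which is `ν`-negligible; so the numerator, measured
relative to the size of the balls, tends to `0` by dominated convergence. The density bounds
`ι ≤ h ≤ H` make `μ(B(z, r))` at most `H/ι` times its `ν`-average, which gives the dominating
constant. The avoidance conditions at the intermediate times `1, …, k` are simply dropped. -/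

theorem AddCircle.volume_ball {T : ℝ} [Fact (0 < T)] (x : AddCircle T) (ε : ℝ) :
    volume (ball x ε) = ENNReal.ofReal (min T (2 * ε)) := by
  rw [← measure_congr AddCircle.closedBall_ae_eq_ball, AddCircle.volume_closedBall]

theorem MeasureTheory.withDensity_le_smul {α : Type*} [MeasurableSpace α] {μ : Measure α}
    {f : α → ℝ≥0∞} {c : ℝ≥0∞} (hf : ∀ x, f x ≤ c) : μ.withDensity f ≤ c • μ :=
  withDensity_const c ▸ withDensity_mono (ae_of_all _ hf)

theorem MeasureTheory.smul_le_withDensity {α : Type*} [MeasurableSpace α] {μ : Measure α}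
    {f : α → ℝ≥0∞} {c : ℝ≥0∞} (hf : ∀ x, c ≤ f x) : c • μ ≤ μ.withDensity f :=
  withDensity_const c ▸ withDensity_mono (ae_of_all _ hf)

section MovingTarget

variable {X Y : Type*} [PseudoMetricSpace X] [MetricSpace Y]

theorem measure_ball_le_div_mul_lintegral_measure_ball [MeasurableSpace X]
    {μ ρ ν : Measure X} [IsProbabilityMeasure ν] {c C : ℝ≥0∞} (hc₀ : c ≠ 0) (hc : c ≠ ∞)
    (hlower : c • ρ ≤ μ) (hupper : μ ≤ C • ρ) {ε : ℝ} (hρ : ∀ z w, ρ (ball z ε) = ρ (ball w ε))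
    (z : X) : μ (ball z ε) ≤ C / c * ∫⁻ w, μ (ball w ε) ∂ν :=
  calc μ (ball z ε) ≤ C * ρ (ball z ε) := hupper _
    _ = C / c * ∫⁻ w, c * ρ (ball w ε) ∂ν := by
      simp only [← hρ z, lintegral_const, measure_univ, mul_one, ← mul_assoc,
        ENNReal.div_mul_cancel hc₀ hc]
    _ ≤ C / c * ∫⁻ w, μ (ball w ε) ∂ν := mul_le_mul_right (lintegral_mono fun w => hlower _) _

theorem eventually_ball_inter_preimage_ball_eq_empty {g : X → Y} {z : X} {w : Y}
    (hg : ContinuousAt g z) (hw : g z ≠ w) :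
    ∀ᶠ ε in 𝓝 (0 : ℝ), ball z ε ∩ g ⁻¹' ball w ε = ∅ := by
  have hδ : 0 < dist (g z) w / 2 := half_pos (dist_pos.2 hw)
  obtain ⟨η, hη, hball⟩ := Metric.mem_nhds_iff.1 (hg (ball_mem_nhds (g z) hδ))
  filter_upwards [gt_mem_nhds (lt_min hη hδ)] with ε hε
  refine eq_empty_of_forall_notMem fun x ⟨hxz, hxw⟩ => ?_
  have hgx : dist (g x) (g z) < dist (g z) w / 2 :=
    hball (ball_subset_ball (hε.le.trans (min_le_left _ _)) hxz)
  have hgw : dist (g x) w < dist (g z) w / 2 := hxw.trans_le (hε.le.trans (min_le_right _ _))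
  linarith [dist_triangle_left (g z) w (g x)]

variable [MeasurableSpace X] [OpensMeasurableSpace X] [SecondCountableTopology X]

theorem measurable_measure_ball_inter_preimage_ball (μ : Measure X) [SFinite μ]
    {g F : X → Y} (hg : Continuous g) (hF : Continuous F) (ε : ℝ) :
    Measurable fun z => μ (ball z ε ∩ g ⁻¹' ball (F z) ε) := by
  have hS : IsOpen {p : X × X | dist p.2 p.1 < ε ∧ dist (g p.2) (F p.1) < ε} :=
    (isOpen_lt (continuous_snd.dist continuous_fst) continuous_const).inter
      (isOpen_lt ((hg.comp continuous_snd).dist (hF.comp continuous_fst)) continuous_const)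
  exact measurable_measure_prodMk_left hS.measurableSet

theorem tendsto_lintegral_measure_ball_inter_preimage_ball_div (μ ν : Measure X) [SFinite μ]
    [IsFiniteMeasure ν] {g F : X → Y} (hg : Continuous g) (hF : Continuous F)
    (hν : ν {z | g z = F z} = 0) {r : ℕ → ℝ} (hr : Tendsto r atTop (𝓝 0)) {a : ℕ → ℝ≥0∞}
    {C : ℝ≥0∞} (hC : C ≠ ∞) (hball : ∀ n z, μ (ball z (r n)) ≤ C * a n) :
    Tendsto (fun n => (∫⁻ z, μ (ball z (r n) ∩ g ⁻¹' ball (F z) (r n)) ∂ν) / a n)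
      atTop (𝓝 0) := by
  have hmeas n := measurable_measure_ball_inter_preimage_ball μ hg hF (r n)
  simp only [div_eq_mul_inv, ← lintegral_mul_const'' _ (hmeas _).aemeasurable]
  rw [← lintegral_zero]
  refine tendsto_lintegral_of_dominated_convergence (fun _ => C) (fun n => (hmeas n).mul_const _)
    (fun n => ae_of_all _ fun z => ?_)
    (by simpa using ENNReal.mul_ne_top hC (measure_ne_top ν univ)) ?_
  · show _ * _ ≤ C
    rw [← div_eq_mul_inv]
    exact ENNReal.div_le_of_le_mul ((measure_mono inter_subset_left).trans (hball n z))
  · have hne : ∀ᵐ z ∂ν, g z ≠ F z := measure_eq_zero_iff_ae_notMem.1 hν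
    filter_upwards [hne] with z hz
    refine tendsto_const_nhds.congr' ?_
    filter_upwards [hr.eventually (eventually_ball_inter_preimage_ball_eq_empty hg.continuousAt hz)]
      with n hn
    simp [hn]

end MovingTarget

theorem stmt2_general (h : UnitAddCircle → ℝ)
    (ι H : ℝ) (hι : 0 < ι) (hbd : ∀ x, ι ≤ h x ∧ h x ≤ H)
    (μ : Measure UnitAddCircle)
    (hμ : μ = volume.withDensity fun x => ENNReal.ofReal (h x))
    (T f : UnitAddCircle → UnitAddCircle) (hT : Continuous T) (hf : Continuous f)
    (ν : Measure UnitAddCircle) [IsProbabilityMeasure ν]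
    (k : ℕ) (hν : ν {z | T^[k+1] z = f^[k+1] z} = 0)
    (r : ℕ → ℝ)
    (hr0 : Tendsto r atTop (nhds 0)) :
    Tendsto (fun n =>
      (∫⁻ z, μ (ball z (r n)
          ∩ (⋂ j ∈ Finset.Icc 1 k, (T^[j]) ⁻¹' (ball (f^[j] z) (r n))ᶜ)
          ∩ (T^[k+1]) ⁻¹' ball (f^[k+1] z) (r n)) ∂ν)
        / ∫⁻ z, μ (ball z (r n)) ∂ν)
      atTop (nhds 0) := by
  have : SFinite μ := hμ ▸ inferInstance
  have hι₀ : ENNReal.ofReal ι ≠ 0 := ENNReal.ofReal_ne_zero_iff.2 hι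
  have hball n z := measure_ball_le_div_mul_lintegral_measure_ball (ν := ν) hι₀
    ENNReal.ofReal_ne_top
    (hμ ▸ smul_le_withDensity fun x => ENNReal.ofReal_le_ofReal (hbd x).1)
    (hμ ▸ withDensity_le_smul fun x => ENNReal.ofReal_le_ofReal (hbd x).2)
    (fun z w => by rw [AddCircle.volume_ball, AddCircle.volume_ball]) (ε := r n) z
  refine tendsto_of_tendsto_of_tendsto_of_le_of_le tendsto_const_nhds
    (tendsto_lintegral_measure_ball_inter_preimage_ball_div μ ν (hT.iterate (k + 1))
      (hf.iterate (k + 1)) hν hr0 (ENNReal.div_ne_top ENNReal.ofReal_ne_top hι₀) hball)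
    (fun _ => zero_le) fun n => ?_
  refine ENNReal.div_le_div_right (lintegral_mono fun z => measure_mono ?_) _
  rintro x ⟨⟨hx, -⟩, hTx⟩
  exact ⟨hx, hTx⟩

/-- Moving target with continuous noise on the circle: if the measure `μ` has density
`h` bounded between `ι > 0` and `H`, the center of the target ball moves under a
continuous map `f`, and `ν({z : T^{k+1} z = f^{k+1} z}) = 0`, then the finite-resolution
cluster coefficient `q_k^{(n)}` tends to `0` along any decreasing sequence of radii
`r_n → 0` (hence the extremal index is `1`). -/
theorem stmt2 (h : UnitAddCircle → ℝ) (hmeas : Measurable h)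
    (ι H : ℝ) (hι : 0 < ι) (hbd : ∀ x, ι ≤ h x ∧ h x ≤ H)
    (μ : Measure UnitAddCircle)
    (hμ : μ = volume.withDensity fun x => ENNReal.ofReal (h x))
    (T f : UnitAddCircle → UnitAddCircle) (hT : Continuous T) (hf : Continuous f)
    (ν : Measure UnitAddCircle) [IsProbabilityMeasure ν]
    (k : ℕ) (hν : ν {z | T^[k+1] z = f^[k+1] z} = 0)
    (r : ℕ → ℝ) (hr : ∀ n, 0 < r n ∧ r n < 1/2) (hanti : Antitone r)
    (hr0 : Tendsto r atTop (nhds 0)) :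
    Tendsto (fun n =>
      (∫⁻ z, μ (ball z (r n)
          ∩ (⋂ j ∈ Finset.Icc 1 k, (T^[j]) ⁻¹' (ball (f^[j] z) (r n))ᶜ)
          ∩ (T^[k+1]) ⁻¹' ball (f^[k+1] z) (r n)) ∂ν)
        / ∫⁻ z, μ (ball z (r n)) ∂ν)
      atTop (nhds 0) :=
  stmt2_general h ι H hι hbd μ hμ T f hT hf ν k hν r hr0
end

section
/- Let p, q be positive coprime integers with 0 < p < q, and on the circle 𝕋 = ℝ/ℤ let f_0(x) = 2x mod 1 and f_1(x) = 2x + p/q mod 1. Then the set of integers m ≥ 2 for which there exists a word (ξ_1,…,ξ_m) ∈ {0,1}^m with ξ_1 = 1 such that f_{ξ_m} ∘ ⋯ ∘ f_{ξ_1}(0) = 0 while f_{ξ_j} ∘ ⋯ ∘ f_{ξ_1}(0) ≠ 0 for all 1 ≤ j ≤ m − 1, is infinite. (Hence for rational translation b, infinitely many of the cluster coefficients q_k of the annealed random system are nonzero.) -/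
/-! Reading the binary digits of `n`, most significant first, drives `0` to `n • b`, and the
prefix of length `j` drives it to `⌊n / 2^(size n - j)⌋ • b`. For `b = p/q` in lowest terms,
`n • b = 0` exactly when `q ∣ n`. The binary word of `n = q (2^k - 1)` therefore returns to `0`, and
no proper prefix does, since no `⌊q (2^k - 1) / 2^i⌋` with `i ≥ 1` and `2^i ≤ n` is a multiple of
`q`. Its length exceeds `k`, so these lengths are unbounded. -/

open MeasureTheory Set

/-- The random map on the circle: `dstep b false x = 2x mod 1`,
`dstep b true x = 2x + b mod 1`. -/
noncomputable def dstep (b : ℝ) : Bool → UnitAddCircle → UnitAddCircle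
  | false, x => x + x
  | true, x => x + x + (b : UnitAddCircle)

/-- The concatenation `f_{ξ_m} ∘ ⋯ ∘ f_{ξ_1}` associated to the word
`l = [ξ_1, …, ξ_m]` (the first letter of the list is applied first). -/
noncomputable def wordMap (b : ℝ) (l : List Bool) (x : UnitAddCircle) : UnitAddCircle :=
  l.foldl (fun y s => dstep b s y) x

lemma wordMap_append_singleton (b : ℝ) (l : List Bool) (s : Bool) (x : UnitAddCircle) :
    wordMap b (l ++ [s]) x = dstep b s (wordMap b l x) := by
  simp [wordMap]

lemma wordMap_reverse_bits (b : ℝ) (n : ℕ) :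
    wordMap b n.bits.reverse 0 = n • (b : UnitAddCircle) := by
  induction n using Nat.binaryRec' with
  | zero => simp [wordMap]
  | bit s n h ih =>
    rw [Nat.bits_append_bit _ _ h, List.reverse_cons, wordMap_append_singleton, ih]
    cases s <;> simp [dstep, Nat.bit, add_nsmul, two_mul]

lemma Nat.drop_bits (n i : ℕ) : n.bits.drop i = (n / 2 ^ i).bits := by
  induction i with
  | zero => simp
  | succ i ih =>
    rw [← List.tail_drop, ih, ← Nat.div2_bits_eq_tail, Nat.div2_val, Nat.div_div_eq_div_mul,
      pow_succ]

lemma Nat.take_reverse_bits (n j : ℕ) :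
    n.bits.reverse.take j = (n / 2 ^ (n.size - j)).bits.reverse := by
  rw [List.take_reverse, Nat.drop_bits, Nat.size_eq_bits_len]

lemma Nat.div_two_pow_size_sub_one {n : ℕ} (hn : n ≠ 0) : n / 2 ^ (n.size - 1) = 1 := by
  have hsize : 0 < n.size := Nat.size_pos.2 (Nat.pos_of_ne_zero hn)
  apply Nat.div_eq_of_lt_le
  · simpa using Nat.lt_size.1 (Nat.sub_one_lt_of_lt hsize)
  · have hlt := Nat.lt_size_self n
    rw [← Nat.sub_add_cancel hsize, pow_succ] at hlt
    linarith

lemma Nat.head?_reverse_bits {n : ℕ} (hn : n ≠ 0) : n.bits.reverse.head? = some true := by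
  have hhead : (n.bits.reverse.take 1).head? = n.bits.reverse.head? := by
    simp [List.head?_take]
  rw [← hhead, Nat.take_reverse_bits, Nat.div_two_pow_size_sub_one hn]
  simp

lemma nsmul_coe_div_eq_zero_iff {p q : ℕ} (hq : 0 < q) (hpq : p.Coprime q) (n : ℕ) :
    n • ((p / q : ℝ) : UnitAddCircle) = 0 ↔ q ∣ n := by
  have horder := AddCircle.addOrderOf_div_of_gcd_eq_one (p := (1 : ℝ)) hq hpq
  rw [mul_one] at horder
  rw [← addOrderOf_dvd_iff_nsmul_eq_zero, horder]

/- If `⌊q M / 2^i⌋ = q c` with `M = 2^k - 1`, then `q (M - c 2^i) < 2^i`. When `i ≤ k`,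
`M - c 2^i ≡ -1 (mod 2^i)` is at least `2^i - 1`, too large as `q ≥ 2`; when `i > k`, `M < 2^i`
forces `c = 0`, contradicting `2^i ≤ q M`. -/
lemma not_dvd_mul_two_pow_sub_one_div_two_pow {q k i : ℕ} (hq : 2 ≤ q) (hi : 1 ≤ i)
    (hN : 2 ^ i ≤ q * (2 ^ k - 1)) : ¬ q ∣ q * (2 ^ k - 1) / 2 ^ i := by
  rintro ⟨c, hc⟩
  have hi2 : 2 ≤ 2 ^ i := Nat.le_self_pow (by omega) 2
  obtain ⟨M, hM⟩ : ∃ M, 2 ^ k = M + 1 := ⟨2 ^ k - 1, by have := @Nat.one_le_two_pow k; omega⟩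
  rw [hM, Nat.add_sub_cancel] at hN hc
  have hc0 : 0 < c := by
    have hdiv := Nat.div_pos hN (by omega)
    rw [hc] at hdiv
    exact Nat.pos_of_mul_pos_left hdiv
  have hlow : q * c * 2 ^ i ≤ q * M := hc ▸ Nat.div_mul_le_self _ _
  have hhigh : q * M < q * c * 2 ^ i + 2 ^ i := by
    have hsucc := Nat.lt_mul_div_succ (q * M) (show 0 < 2 ^ i by omega)
    rw [hc] at hsucc
    linarith
  have hle : c * 2 ^ i ≤ M :=
    Nat.le_of_mul_le_mul_left (by rwa [mul_assoc] at hlow) (by omega)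
  rcases le_or_gt i k with hik | hki
  · obtain ⟨t, ht⟩ : 2 ^ i ∣ 2 ^ k := pow_dvd_pow 2 hik
    have hct : c + 1 ≤ t := by
      by_contra! h
      nlinarith
    nlinarith
  · have hpow : 2 ^ k < 2 ^ i := Nat.pow_lt_pow_right (by norm_num) hki
    nlinarith

/-- For rational translation `b = p/q` in lowest terms, there are infinitely many
lengths `m ≥ 2` admitting a word `(ξ_1,…,ξ_m)` with `ξ_1 = 1` whose concatenation
returns `0` to itself after exactly `m` steps and not before: hence infinitely many
cluster coefficients `q_{m−1}` are nonzero. -/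
theorem stmt5 (p q : ℕ) (hp : 0 < p) (hpq : p < q) (hco : Nat.Coprime p q) :
    {m : ℕ | 2 ≤ m ∧ ∃ l : List Bool, l.length = m ∧ l.head? = some true ∧
      wordMap ((p : ℝ) / q) l 0 = 0 ∧
      ∀ j : ℕ, 1 ≤ j → j ≤ m - 1 → wordMap ((p : ℝ) / q) (l.take j) 0 ≠ 0}.Infinite := by
  have hq : 2 ≤ q := by omega
  refine Set.infinite_of_forall_exists_gt fun a => ?_
  set N := q * (2 ^ (a + 1) - 1)
  have hpowN : 2 ^ (a + 1) ≤ N := by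
    have hqN := Nat.mul_le_mul_right (2 ^ (a + 1) - 1) hq
    have htwo : 2 ≤ 2 ^ (a + 1) := Nat.le_self_pow (by omega) 2
    omega
  have hN0 : 0 < N := (Nat.two_pow_pos _).trans_le hpowN
  have hsize : a + 1 < N.size := Nat.lt_size.2 hpowN
  refine ⟨N.size, ⟨by omega, N.bits.reverse, by simp [Nat.size_eq_bits_len],
    Nat.head?_reverse_bits hN0.ne', ?_, fun j hj1 hj2 => ?_⟩, by omega⟩
  · rw [wordMap_reverse_bits, nsmul_coe_div_eq_zero_iff (by omega) hco]
    exact dvd_mul_right q _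
  · rw [Nat.take_reverse_bits, wordMap_reverse_bits, Ne, nsmul_coe_div_eq_zero_iff (by omega) hco]
    exact not_dvd_mul_two_pow_sub_one_div_two_pow hq (by omega)
      (Nat.lt_size.1 (Nat.sub_lt (Nat.size_pos.2 hN0) hj1))
end

section
/- Work on the circle 𝕋 = ℝ/ℤ with Lebesgue (Haar) measure λ and open balls B(z,r), and let T(x) = 2x mod 1. Let z_0, z_1, z_2, z_3 ∈ 𝕋 be pairwise distinct points with T(z_1) = T(z_2) = z_0, T(z_0) = z_3, and T(z_3) ∉ {z_0, z_1, z_2, z_3}. Then lim_{r→0⁺} [ Σ_{i=0}^{3} Σ_{j=0}^{3} (1/16)·λ( B(z_j, r) ∩ T^{-1}(B(z_i, r)) ) ] / [ Σ_{i=0}^{3} (1/4)·λ(B(z_i, r)) ] = 3/32. (This is the coefficient q_0 of the moving-target process in which the center of the target ball is chosen uniformly among z_0, z_1, z_2, z_3 at each step; hence the extremal index is strictly less than 1.) -/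
/-!
For small `r`, the set `B(z, r) ∩ T⁻¹ B(w, r)` is empty when `T z ≠ w`, since `T` is
`2`-Lipschitz; when `T z = w` it is `B(z, r/2)`, of measure `r`, since `T` doubles distances
below `1/4`. Exactly three of the sixteen pairs `(z_j, z_i)` satisfy `T z_j = z_i`, so for all
small `r` the ratio equals `(3r/16) / (2r) = 3/32`.
-/

open MeasureTheory Set Filter Metric
open scoped ENNReal NNReal Topology

theorem LipschitzWith.ball_inter_preimage_ball_eq_empty {α β : Type*} [PseudoMetricSpace α]
    [PseudoMetricSpace β] {f : α → β} {K : ℝ≥0} (hf : LipschitzWith K f) {z : α} {w : β}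
    {r : ℝ} (h : (K + 1) * r ≤ dist (f z) w) : ball z r ∩ f ⁻¹' ball w r = ∅ := by
  refine eq_empty_iff_forall_notMem.2 fun x ⟨hxz, hxw⟩ => ?_
  have hfx : dist (f z) (f x) ≤ K * r :=
    (hf.dist_le_mul z x).trans (by gcongr; exact (mem_ball'.1 hxz).le)
  linarith [dist_triangle (f z) (f x) w, mem_ball.1 (mem_preimage.1 hxw)]

theorem Function.Injective.sum_ite_eq_indicator {ι α M : Type*} [Fintype ι] [DecidableEq α]
    [AddCommMonoid M] {z : ι → α} (hz : Function.Injective z) (w : α) (c : M) :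
    ∑ i, (if w = z i then c else 0) = (range z).indicator (fun _ => c) w := by
  by_cases hw : w ∈ range z
  · obtain ⟨k, rfl⟩ := hw
    rw [indicator_of_mem (mem_range_self k),
      Fintype.sum_eq_single k fun i hi => if_neg (hz.ne (Ne.symm hi)), if_pos rfl]
  · rw [indicator_of_notMem hw]
    exact Finset.sum_eq_zero fun i _ => if_neg fun h => hw ⟨i, h.symm⟩

namespace UnitAddCircle

theorem norm_nsmul_of_mul_norm_le {n : ℕ} {w : UnitAddCircle} (h : n * ‖w‖ ≤ 1 / 2) :
    ‖n • w‖ = n * ‖w‖ := by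
  obtain ⟨t, rfl, ht⟩ : ∃ t : ℝ, (t : UnitAddCircle) = w ∧ ‖(t : UnitAddCircle)‖ = |t| := by
    induction w using QuotientAddGroup.induction_on with
    | H x =>
      refine ⟨x - round x, ?_, ?_⟩
      · rw [AddCircle.coe_sub, sub_eq_self, AddCircle.coe_eq_zero_iff]
        exact ⟨round x, by simp⟩
      · rw [AddCircle.norm_coe_eq_abs_iff _ one_ne_zero, abs_one]
        exact abs_sub_round x
  rw [ht] at h ⊢
  rw [← AddCircle.coe_nsmul, nsmul_eq_mul, (AddCircle.norm_coe_eq_abs_iff _ one_ne_zero).2,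
    abs_mul, Nat.abs_cast]
  rwa [abs_mul, Nat.abs_cast, abs_one]

theorem volume_ball (x : UnitAddCircle) {r : ℝ} (hr : r ≤ 1 / 2) :
    volume (ball x r) = ENNReal.ofReal (2 * r) := by
  rw [← measure_congr AddCircle.closedBall_ae_eq_ball, AddCircle.volume_closedBall,
    min_eq_right (by linarith)]

theorem ball_inter_preimage_double_ball {z : UnitAddCircle} {r : ℝ} (hr : r ≤ 1 / 4) :
    ball z r ∩ (fun x => x + x) ⁻¹' ball (z + z) r = ball z (r / 2) := by
  ext x
  have hdouble : x + x - (z + z) = 2 • (x - z) := by abel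
  simp only [mem_inter_iff, mem_ball, mem_preimage, dist_eq_norm, hdouble]
  constructor
  · rintro ⟨hxz, hxz2⟩
    rw [norm_nsmul_of_mul_norm_le (by push_cast; linarith)] at hxz2
    push_cast at hxz2
    linarith
  · intro hxz
    have hnonneg := norm_nonneg (x - z)
    refine ⟨by linarith, ?_⟩
    rw [norm_nsmul_of_mul_norm_le (by push_cast; linarith)]
    push_cast
    linarith

theorem eventually_volume_ball_inter_preimage_double_ball (z w : UnitAddCircle) :
    ∀ᶠ r in 𝓝[>] 0, volume (ball z r ∩ (fun x => x + x) ⁻¹' ball w r) =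
      if z + z = w then ENNReal.ofReal r else 0 := by
  split_ifs with h
  · subst h
    filter_upwards [Ioo_mem_nhdsGT (by norm_num : (0 : ℝ) < 1 / 4)] with r hr
    rw [ball_inter_preimage_double_ball hr.2.le, volume_ball _ (by linarith [hr.2])]
    ring_nf
  · have hd : 0 < dist (z + z) w := dist_pos.2 h
    filter_upwards [Ioo_mem_nhdsGT (by positivity : 0 < dist (z + z) w / 3)] with r hr
    have hlip : LipschitzWith (1 + 1) fun x : UnitAddCircle => x + x :=
      LipschitzWith.id.add LipschitzWith.id
    rw [hlip.ball_inter_preimage_ball_eq_empty (by push_cast; linarith [hr.2]), measure_empty]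

end UnitAddCircle

/-- Moving target with discrete noise: `T(x) = 2x mod 1` on the circle, and the center
of the target ball is chosen uniformly among four pairwise distinct points
`z₀, z₁, z₂, z₃` with `T z₁ = T z₂ = z₀`, `T z₀ = z₃`, `T z₃ ∉ {z₀, z₁, z₂, z₃}`.
Then the cluster coefficient
`q₀ = lim_{r→0⁺} [Σ_{i,j} (1/16) λ(B(z_j,r) ∩ T⁻¹ B(z_i,r))] / [Σ_i (1/4) λ(B(z_i,r))]`
equals `3/32`. -/
theorem stmt9 (T : UnitAddCircle → UnitAddCircle) (hT : ∀ x, T x = x + x)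
    (z : Fin 4 → UnitAddCircle) (hinj : Function.Injective z)
    (h1 : T (z 1) = z 0) (h2 : T (z 2) = z 0) (h0 : T (z 0) = z 3)
    (h3 : T (z 3) ∉ Set.range z) :
    Tendsto (fun r : ℝ =>
      (∑ i : Fin 4, ∑ j : Fin 4,
        (16⁻¹ : ℝ≥0∞) * volume (ball (z j) r ∩ T ⁻¹' ball (z i) r))
        / ∑ i : Fin 4, (4⁻¹ : ℝ≥0∞) * volume (ball (z i) r))
      (nhdsWithin 0 (Set.Ioi 0)) (nhds (3/32 : ℝ≥0∞)) := by
  simp only [hT] at h0 h1 h2 h3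
  obtain rfl : T = fun x => x + x := funext hT
  have hcount (X : ℝ≥0∞) :
      ∑ i, ∑ j, (if z j + z j = z i then X else 0) = 3 * X := by
    rw [Finset.sum_comm]
    simp only [hinj.sum_ite_eq_indicator, Fin.sum_univ_four, h0, h1, h2,
      indicator_of_mem (mem_range_self _), indicator_of_notMem h3]
    ring
  refine tendsto_const_nhds.congr' ?_
  filter_upwards [eventually_all.2 fun i => eventually_all.2 fun j =>
      UnitAddCircle.eventually_volume_ball_inter_preimage_double_ball (z j) (z i),
    Ioo_mem_nhdsGT (by norm_num : (0 : ℝ) < 1 / 2)] with r hinter hr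
  have hX : ENNReal.ofReal r ≠ 0 := ENNReal.ofReal_ne_zero_iff.2 hr.1
  simp only [hinter, UnitAddCircle.volume_ball _ hr.2.le]
  simp_rw [← Finset.mul_sum, hcount, Finset.sum_const, Finset.card_univ, Fintype.card_fin,
    nsmul_eq_mul, Nat.cast_ofNat]
  rw [ENNReal.inv_mul_cancel_left (by norm_num) (by norm_num), ENNReal.ofReal_mul zero_le_two,
    ENNReal.ofReal_ofNat, ← mul_assoc, ENNReal.mul_div_mul_right _ _ hX ENNReal.ofReal_ne_top]
  have hcoe : ((3 / 32 : ℝ≥0) : ℝ≥0∞) = ((16⁻¹ * 3 / 2 : ℝ≥0) : ℝ≥0∞) := by norm_num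
  simpa using hcoe
end

section
/- Work on the circle 𝕋 = ℝ/ℤ with quotient metric d, and let b ∈ (0,1) be a real number. Let f_0(x) = 3x mod 1 and f_1(x) = 3x + b mod 1. Fix k ≥ 2, let Δ_r^k = {(x_1,…,x_k) ∈ 𝕋^k : max_{i=2,…,k} d(x_1, x_i) < r}, and for ξ = (ξ_1,…,ξ_k) ∈ {0,1}^k let f_ξ = f_{ξ_1} × ⋯ × f_{ξ_k} be the product map acting coordinatewise. If ξ is not constant (i.e., ξ_i ≠ ξ_j for some i, j) and 0 < r < min(b, 1−b)/4, then Δ_r^k ∩ f_ξ^{-1}(Δ_r^k) = ∅. -/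
/-!
Let `x₁` and `xᵢ` be coordinates with `ξ₁ ≠ ξᵢ`, at distance `< r`. Tripling expands distances on
the circle at most threefold, so `3x₁` and `3xᵢ` are `3r`-close, and the extra rotation by `b` in
exactly one of the two coordinates moves it by `‖b‖ = min(b, 1 - b)`. Hence the images are at
distance at least `min(b, 1 - b) - 3r > r`, and cannot lie in `Δ_r^k` again.
-/

open Set

section
variable {G : Type*} [SeminormedAddCommGroup G]

lemma dist_nsmul_nsmul_le (n : ℕ) (x y : G) : dist (n • x) (n • y) ≤ n * dist x y := by
  simpa only [dist_eq_norm, ← nsmul_sub] using norm_nsmul_le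

lemma norm_sub_mul_dist_le_dist_nsmul_add (n : ℕ) (x y c : G) :
    ‖c‖ - n * dist x y ≤ dist (n • x) (n • y + c) := by
  have := dist_triangle (n • y) (n • x) (n • y + c)
  rw [dist_self_add_right, dist_comm] at this
  linarith [dist_nsmul_nsmul_le n x y]

end

lemma UnitAddCircle.norm_coe_of_mem_Ico {b : ℝ} (hb : b ∈ Ico 0 1) :
    ‖(b : UnitAddCircle)‖ = min b (1 - b) := by
  rw [UnitAddCircle.norm_eq, abs_sub_round_eq_min, Int.fract_eq_self.mpr hb]

lemma UnitAddCircle.min_sub_three_mul_dist_le_dist_triple_add (b : ℝ) (hb : b ∈ Ico 0 1)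
    (x y : UnitAddCircle) :
    min b (1 - b) - 3 * dist x y ≤ dist (x + x + x) (y + y + y + (b : UnitAddCircle)) := by
  have triple (z : UnitAddCircle) : z + z + z = 3 • z := by abel
  rw [← norm_coe_of_mem_Ico hb, triple, triple]
  exact_mod_cast norm_sub_mul_dist_le_dist_nsmul_add 3 x y _

lemma UnitAddCircle.min_sub_three_mul_dist_le_dist_of_ne {b : ℝ} (hb : b ∈ Ico 0 1)
    {f : Bool → UnitAddCircle → UnitAddCircle}
    (hf₀ : ∀ x, f false x = x + x + x) (hf₁ : ∀ x, f true x = x + x + x + (b : UnitAddCircle))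
    {p q : Bool} (hpq : p ≠ q) (x y : UnitAddCircle) :
    min b (1 - b) - 3 * dist x y ≤ dist (f p x) (f q y) := by
  cases p <;> cases q
  · exact absurd rfl hpq
  · rw [hf₀, hf₁]
    exact min_sub_three_mul_dist_le_dist_triple_add b hb x y
  · rw [hf₀, hf₁, dist_comm _ (y + y + y), dist_comm x]
    exact min_sub_three_mul_dist_le_dist_triple_add b hb y x
  · exact absurd rfl hpq

/-- For the maps `f₀(x) = 3x mod 1` and `f₁(x) = 3x + b mod 1` on the circle, a
non-constant word `ξ ∈ {0,1}^k` and `0 < r < min(b, 1−b)/4`, the `r`-neighborhood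
`Δ_r^k` of the diagonal in `𝕋^k` satisfies `Δ_r^k ∩ f_ξ⁻¹(Δ_r^k) = ∅`, where `f_ξ`
acts coordinatewise by `f_{ξ_i}`. -/
theorem stmt13 (b : ℝ) (hb : b ∈ Set.Ioo (0:ℝ) 1)
    (f : Bool → UnitAddCircle → UnitAddCircle)
    (hf₀ : ∀ x, f false x = x + x + x)
    (hf₁ : ∀ x, f true x = x + x + x + (b : UnitAddCircle))
    (k : ℕ) (hk : 2 ≤ k) (ξ : Fin k → Bool) (hξ : ∃ i j, ξ i ≠ ξ j)
    (r : ℝ) (hr' : r < min b (1 - b) / 4)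
    (Δ : Set (Fin k → UnitAddCircle))
    (hΔ : Δ = {x | ∀ i : Fin k, i ≠ ⟨0, by omega⟩ → dist (x ⟨0, by omega⟩) (x i) < r}) :
    Δ ∩ (fun x i => f (ξ i) (x i)) ⁻¹' Δ = ∅ := by
  subst hΔ
  set o : Fin k := ⟨0, by omega⟩
  obtain ⟨m, hm⟩ : ∃ m, ξ m ≠ ξ o := by
    obtain ⟨i, j, hij⟩ := hξ
    by_cases hi : ξ i = ξ o
    · exact ⟨j, fun hj => hij (hi.trans hj.symm)⟩
    · exact ⟨i, hi⟩
  have hmo : m ≠ o := by rintro rfl; exact hm rfl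
  refine eq_empty_iff_forall_notMem.mpr fun x ⟨hx, hfx⟩ => ?_
  have hsep := UnitAddCircle.min_sub_three_mul_dist_le_dist_of_ne (Ioo_subset_Ico_self hb)
    hf₀ hf₁ hm.symm (x o) (x m)
  linarith [hx m hmo, hfx m hmo]
end

section
/- Let T : [0,1) → [0,1) be the piecewise linear Markov map T(x) = 3x for x ∈ [0,1/3), T(x) = 5/3 − 2x for x ∈ [1/3,2/3), T(x) = 3x − 2 for x ∈ [2/3,1), let h = 3/5 on [0,1/3) and h = 6/5 on [1/3,1), and let |T'| be the piecewise constant function equal to 3 on [0,1/3), 2 on [1/3,2/3), 3 on [2/3,1). Then for every integer k ≥ 0, ∫_0^1 h(x)² / ∏_{j=0}^{k−1} |T'(T^j x)| dx = (9/25) · [ (3√145 − 37)·(17 − √145)^k + (37 + 3√145)·(17 + √145)^k ] / (2 · 72^k · √145). (In particular the values are 27/25, 11/25, 8/45 for k = 0, 1, 2; these integrals determine the limiting return-time distribution functions α̂_{k+1} of the neighborhood of the diagonal, and the associated cluster size distribution is not geometric, so the statistics of visits is compound Poisson but not Pólya–Aeppli.) -/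
/-!
Write `g_k = 1/|DT^k|`. Since `g_{k+1}(x) = g_k(T x)/|T'(x)|` and each branch of `T` is affine
onto `[0,1)` or `[1/3,1)`, the substitution `y = T x` turns the masses of `g_{k+1}` on the three
branch intervals into masses of `g_k`: with `a_k, b_k` the masses of `g_k` on `[0,1/3)` and
`[1/3,2/3)` (the mass on `[2/3,1)` is again `a_k`),
`a_{k+1} = (2 a_k + b_k)/9` and `b_{k+1} = (a_k + b_k)/4`. The matrix of this recursion has
eigenvalues `(17 ± √145)/72`, and the integral is `(9/25)(5 a_k + 4 b_k)`.
-/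

open MeasureTheory Set

noncomputable section

def markovMap (x : ℝ) : ℝ :=
  if x < 1/3 then 3*x else if x < 2/3 then 5/3 - 2*x else 3*x - 2

def markovSlope (x : ℝ) : ℝ :=
  if x < 1/3 then 3 else if x < 2/3 then 2 else 3

def markovDensity (x : ℝ) : ℝ :=
  if x < 1/3 then 3/5 else 6/5

/-- `1 / |DT^k(x)|`. -/
def invDerivIterate (k : ℕ) (x : ℝ) : ℝ :=
  (∏ j ∈ Finset.range k, markovSlope (markovMap^[j] x))⁻¹

end

theorem measurable_markovMap : Measurable markovMap :=
  Measurable.ite measurableSet_Iio (by fun_prop) <|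
    Measurable.ite measurableSet_Iio (by fun_prop) (by fun_prop)

theorem measurable_markovSlope : Measurable markovSlope :=
  Measurable.ite measurableSet_Iio measurable_const <|
    Measurable.ite measurableSet_Iio measurable_const measurable_const

theorem measurable_markovDensity : Measurable markovDensity :=
  Measurable.ite measurableSet_Iio measurable_const measurable_const

theorem one_le_markovSlope (x : ℝ) : 1 ≤ markovSlope x := by
  unfold markovSlope; split_ifs <;> norm_num

theorem measurable_invDerivIterate (k : ℕ) : Measurable (invDerivIterate k) :=
  (Finset.measurable_prod _ fun j _ ↦
    measurable_markovSlope.comp (measurable_markovMap.iterate j)).inv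

theorem invDerivIterate_nonneg (k : ℕ) (x : ℝ) : 0 ≤ invDerivIterate k x :=
  inv_nonneg.2 <| Finset.prod_nonneg fun _ _ ↦ zero_le_one.trans (one_le_markovSlope _)

theorem invDerivIterate_le_one (k : ℕ) (x : ℝ) : invDerivIterate k x ≤ 1 :=
  inv_le_one_of_one_le₀ <| Finset.one_le_prod fun _ _ ↦ one_le_markovSlope _

theorem invDerivIterate_zero (x : ℝ) : invDerivIterate 0 x = 1 := by
  simp [invDerivIterate]

theorem invDerivIterate_succ (k : ℕ) (x : ℝ) :
    invDerivIterate (k + 1) x = (markovSlope x)⁻¹ * invDerivIterate k (markovMap x) := by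
  simp only [invDerivIterate, Finset.prod_range_succ', Function.iterate_succ_apply,
    Function.iterate_zero_apply, mul_inv, mul_comm]

theorem intervalIntegrable_of_norm_le {E : Type*} [NormedAddCommGroup E] {μ : Measure ℝ}
    [IsLocallyFiniteMeasure μ] {f : ℝ → E} {C : ℝ} (hf : StronglyMeasurable f)
    (hC : ∀ x, ‖f x‖ ≤ C) (a b : ℝ) : IntervalIntegrable f μ a b :=
  intervalIntegrable_const.mono_fun' hf.aestronglyMeasurable (ae_of_all _ hC)

theorem intervalIntegrable_invDerivIterate (k : ℕ) (a b : ℝ) :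
    IntervalIntegrable (invDerivIterate k) volume a b :=
  intervalIntegrable_of_norm_le (measurable_invDerivIterate k).stronglyMeasurable
    (fun x ↦ (Real.norm_of_nonneg (invDerivIterate_nonneg k x)).trans_le
      (invDerivIterate_le_one k x)) a b

theorem integral_invDerivIterate_succ_of_affine {a b m c : ℝ} (hab : a ≤ b) (hm : m ≠ 0)
    (hT : EqOn markovMap (fun x ↦ m * x + c) (Ioo a b))
    (hD : EqOn markovSlope (fun _ ↦ |m|) (Ioo a b)) (k : ℕ) :
    ∫ x in a..b, invDerivIterate (k + 1) x
      = |m|⁻¹ * m⁻¹ * ∫ x in m * a + c..m * b + c, invDerivIterate k x := by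
  rw [intervalIntegral.integral_congr_Ioo_of_le hab
      (g := fun x ↦ |m|⁻¹ * invDerivIterate k (m * x + c))
      fun x hx ↦ by simp only [invDerivIterate_succ, hT hx, hD hx],
    intervalIntegral.integral_const_mul, intervalIntegral.integral_comp_mul_add _ hm,
    smul_eq_mul, mul_assoc]

theorem integral_invDerivIterate_succ_left (k : ℕ) :
    ∫ x in (0:ℝ)..1/3, invDerivIterate (k + 1) x
      = (∫ x in (0:ℝ)..1, invDerivIterate k x) / 9 := by
  rw [integral_invDerivIterate_succ_of_affine (m := 3) (c := 0) (by norm_num) (by norm_num)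
    (fun x hx ↦ by rw [markovMap, if_pos hx.2]; ring)
    (fun x hx ↦ by rw [markovSlope, if_pos hx.2]; norm_num)]
  norm_num
  ring

theorem integral_invDerivIterate_succ_middle (k : ℕ) :
    ∫ x in (1/3:ℝ)..2/3, invDerivIterate (k + 1) x
      = (∫ x in (1/3:ℝ)..1, invDerivIterate k x) / 4 := by
  rw [integral_invDerivIterate_succ_of_affine (m := -2) (c := 5/3) (by norm_num) (by norm_num)
    (fun x hx ↦ by rw [markovMap, if_neg hx.1.not_gt, if_pos hx.2]; ring)
    (fun x hx ↦ by rw [markovSlope, if_neg hx.1.not_gt, if_pos hx.2]; norm_num),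
    intervalIntegral.integral_symm]
  norm_num
  ring

theorem integral_invDerivIterate_succ_right (k : ℕ) :
    ∫ x in (2/3:ℝ)..1, invDerivIterate (k + 1) x
      = (∫ x in (0:ℝ)..1, invDerivIterate k x) / 9 := by
  have hx₀ {x : ℝ} (hx : x ∈ Ioo (2/3:ℝ) 1) : ¬ x < 1/3 := by linarith [hx.1]
  rw [integral_invDerivIterate_succ_of_affine (m := 3) (c := -2) (by norm_num) (by norm_num)
    (fun x hx ↦ by rw [markovMap, if_neg (hx₀ hx), if_neg hx.1.not_gt]; ring)
    (fun x hx ↦ by rw [markovSlope, if_neg (hx₀ hx), if_neg hx.1.not_gt]; norm_num)]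
  norm_num
  ring

theorem integral_invDerivIterate_right_eq_left (k : ℕ) :
    ∫ x in (2/3:ℝ)..1, invDerivIterate k x = ∫ x in (0:ℝ)..1/3, invDerivIterate k x := by
  cases k with
  | zero => norm_num [invDerivIterate_zero]
  | succ k => rw [integral_invDerivIterate_succ_left, integral_invDerivIterate_succ_right]

theorem integral_invDerivIterate_left_recurrence (k : ℕ) :
    ∫ x in (0:ℝ)..1/3, invDerivIterate (k + 1) x
      = (2 * (∫ x in (0:ℝ)..1/3, invDerivIterate k x)
          + ∫ x in (1/3:ℝ)..2/3, invDerivIterate k x) / 9 := by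
  have ig := intervalIntegrable_invDerivIterate k
  rw [integral_invDerivIterate_succ_left,
    ← intervalIntegral.integral_add_adjacent_intervals (ig 0 (1/3)) (ig (1/3) 1),
    ← intervalIntegral.integral_add_adjacent_intervals (ig (1/3) (2/3)) (ig (2/3) 1),
    integral_invDerivIterate_right_eq_left]
  ring

theorem integral_invDerivIterate_middle_recurrence (k : ℕ) :
    ∫ x in (1/3:ℝ)..2/3, invDerivIterate (k + 1) x
      = ((∫ x in (0:ℝ)..1/3, invDerivIterate k x)
          + (∫ x in (1/3:ℝ)..2/3, invDerivIterate k x)) / 4 := by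
  have ig := intervalIntegrable_invDerivIterate k
  rw [integral_invDerivIterate_succ_middle,
    ← intervalIntegral.integral_add_adjacent_intervals (ig (1/3) (2/3)) (ig (2/3) 1),
    integral_invDerivIterate_right_eq_left]
  ring

theorem five_mul_add_four_mul_eq_of_recurrence {a b : ℕ → ℝ}
    (ha₀ : a 0 = 1/3) (hb₀ : b 0 = 1/3) (ha : ∀ k, a (k + 1) = (2 * a k + b k) / 9)
    (hb : ∀ k, b (k + 1) = (a k + b k) / 4) (k : ℕ) :
    5 * a k + 4 * b k
      = ((3 * √145 - 37) * (17 - √145) ^ k + (37 + 3 * √145) * (17 + √145) ^ k)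
        / (2 * 72 ^ k * √145) := by
  set s := √145
  have hs : s ^ 2 = 145 := Real.sq_sqrt (by norm_num)
  -- `(17 ± s)/72` are the eigenvalues of `[[2/9, 1/9], [1/4, 1/4]]`; the coefficients
  -- are fitted to the initial values.
  have explicit : ∀ k,
      72 ^ k * a k = (1/6 - 7*s/870) * (17 - s) ^ k + (1/6 + 7*s/870) * (17 + s) ^ k ∧
      72 ^ k * b k = (1/6 - 19*s/870) * (17 - s) ^ k + (1/6 + 19*s/870) * (17 + s) ^ k := by
    intro k
    induction k with
    | zero => constructor <;> norm_num [ha₀, hb₀]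
    | succ k ih =>
      rw [ha, hb, pow_succ, pow_succ, pow_succ]
      constructor
      · linear_combination 8 * (2 * ih.1 + ih.2) - (7/870 * ((17 - s) ^ k + (17 + s) ^ k)) * hs
      · linear_combination 18 * (ih.1 + ih.2) - (19/870 * ((17 - s) ^ k + (17 + s) ^ k)) * hs
  obtain ⟨hak, hbk⟩ := explicit k
  rw [eq_div_iff (by positivity)]
  linear_combination (10 * s) * hak + (8 * s) * hbk
    + (37/145 * ((17 + s) ^ k - (17 - s) ^ k)) * hs

theorem integral_markovDensity_sq_mul_invDerivIterate (k : ℕ) :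
    ∫ x in (0:ℝ)..1, markovDensity x ^ 2 * invDerivIterate k x
      = 9/25 * (5 * (∫ x in (0:ℝ)..1/3, invDerivIterate k x)
          + 4 * ∫ x in (1/3:ℝ)..2/3, invDerivIterate k x) := by
  have ig := intervalIntegrable_invDerivIterate k
  have hd (x : ℝ) : markovDensity x ^ 2 ≤ 36/25 := by
    unfold markovDensity; split_ifs <;> norm_num
  have igd : ∀ a b, IntervalIntegrable (fun x ↦ markovDensity x ^ 2 * invDerivIterate k x)
      volume a b :=
    intervalIntegrable_of_norm_le
      ((measurable_markovDensity.pow_const 2).mul (measurable_invDerivIterate k)).stronglyMeasurable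
      fun x ↦ by
        rw [Real.norm_of_nonneg (mul_nonneg (sq_nonneg _) (invDerivIterate_nonneg k x))]
        exact (mul_le_of_le_one_right (sq_nonneg _) (invDerivIterate_le_one k x)).trans (hd x)
  have hleft : ∫ x in (0:ℝ)..1/3, markovDensity x ^ 2 * invDerivIterate k x
      = 9/25 * ∫ x in (0:ℝ)..1/3, invDerivIterate k x := by
    rw [← intervalIntegral.integral_const_mul]
    refine intervalIntegral.integral_congr_Ioo_of_le (by norm_num) fun x hx ↦ ?_
    simp only [markovDensity, if_pos hx.2]
    norm_num
  have hright : ∫ x in (1/3:ℝ)..1, markovDensity x ^ 2 * invDerivIterate k x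
      = 36/25 * ∫ x in (1/3:ℝ)..1, invDerivIterate k x := by
    rw [← intervalIntegral.integral_const_mul]
    refine intervalIntegral.integral_congr_Ioo_of_le (by norm_num) fun x hx ↦ ?_
    simp only [markovDensity, if_neg hx.1.not_gt]
    norm_num
  rw [← intervalIntegral.integral_add_adjacent_intervals (igd 0 (1/3)) (igd (1/3) 1),
    hleft, hright,
    ← intervalIntegral.integral_add_adjacent_intervals (ig (1/3) (2/3)) (ig (2/3) 1),
    integral_invDerivIterate_right_eq_left]
  ring

/-- For the three-branch Markov map `T` with invariant density `h` (`3/5` on `[0,1/3)`,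
`6/5` on `[1/3,1)`) and `|T'|` equal to `3, 2, 3` on the three branches, for every
`k ≥ 0`:
`∫₀¹ h(x)²/|DT^k(x)| dx
  = (9/25)·[(3√145 − 37)(17 − √145)^k + (37 + 3√145)(17 + √145)^k]/(2·72^k·√145)`,
where `|DT^k(x)| = ∏_{j<k} |T'(T^j x)|`. -/
theorem stmt17 (T : ℝ → ℝ)
    (hT : ∀ x, T x = if x < 1/3 then 3*x else if x < 2/3 then 5/3 - 2*x else 3*x - 2)
    (h : ℝ → ℝ) (hh : ∀ x, h x = if x < 1/3 then 3/5 else 6/5)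
    (Tder : ℝ → ℝ)
    (hTder : ∀ x, Tder x = if x < 1/3 then 3 else if x < 2/3 then 2 else 3)
    (k : ℕ) :
    ∫ x in Set.Ico (0:ℝ) 1, h x ^ 2 / ∏ j ∈ Finset.range k, Tder (T^[j] x)
      = (9/25) * ((3 * Real.sqrt 145 - 37) * (17 - Real.sqrt 145) ^ k
          + (37 + 3 * Real.sqrt 145) * (17 + Real.sqrt 145) ^ k)
        / (2 * 72 ^ k * Real.sqrt 145) := by
  obtain rfl : T = markovMap := funext hT
  obtain rfl : Tder = markovSlope := funext hTder
  obtain rfl : h = markovDensity := funext hh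
  rw [integral_Ico_eq_integral_Ioo, ← integral_Ioc_eq_integral_Ioo,
    ← intervalIntegral.integral_of_le zero_le_one]
  change ∫ x in (0:ℝ)..1, markovDensity x ^ 2 * invDerivIterate k x = _
  rw [integral_markovDensity_sq_mul_invDerivIterate]
  linear_combination 9/25 * five_mul_add_four_mul_eq_of_recurrence
    (a := fun k ↦ ∫ x in (0:ℝ)..1/3, invDerivIterate k x)
    (b := fun k ↦ ∫ x in (1/3:ℝ)..2/3, invDerivIterate k x)
    (by norm_num [invDerivIterate_zero]) (by norm_num [invDerivIterate_zero])
    integral_invDerivIterate_left_recurrence integral_invDerivIterate_middle_recurrence k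
end

section
/- Work on the circle 𝕋 = ℝ/ℤ with Lebesgue (Haar) measure λ and open balls B(z,r). Let m ≥ 2 be an integer, T(x) = m·x mod 1, and let z ∈ 𝕋 and p ≥ 1 satisfy T^p(z) = z. Then lim_{r→0⁺} λ( B(z,r) ∩ T^{-p}(B(z,r)) ) / λ(B(z,r)) = 1/m^p. (This is the value 1/|DT^p(z)| appearing in the extremal index θ = 1 − 1/|DT^p(z)| at a periodic point of period p.) -/
/-!
`T^[p]` is `x ↦ m^p • x`, and near a fixed point `z` of `x ↦ n • x` this map is an exact dilation
by `n` about `z`: once `n r ≤ L/2` no wrap-around occurs, so a point of `B(z, r)` is mapped into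
`B(z, r)` exactly when it lies in `B(z, r/n)`. The ratio of volumes is therefore equal to `1/n` for
all small `r`.
-/

open MeasureTheory Set Filter Metric
open scoped ENNReal

namespace AddCircle

variable {L : ℝ} [hL : Fact (0 < L)]

theorem exists_coe_eq_abs_eq_norm (x : AddCircle L) :
    ∃ t : ℝ, (t : AddCircle L) = x ∧ |t| = ‖x‖ := by
  set t : ℝ := (equivIco L (-(L / 2)) x).1
  have ht : t ∈ Ico (-(L / 2)) (-(L / 2) + L) := (equivIco L (-(L / 2)) x).2
  have hcoe : (t : AddCircle L) = x := (equivIco L (-(L / 2))).symm_apply_apply x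
  refine ⟨t, hcoe, ?_⟩
  rw [← hcoe, eq_comm, norm_coe_eq_abs_iff L hL.out.ne', abs_of_pos hL.out, abs_le]
  constructor <;> linarith [ht.1, ht.2]

theorem norm_nsmul_of_mul_norm_le {n : ℕ} {x : AddCircle L} (h : n * ‖x‖ ≤ L / 2) :
    ‖n • x‖ = n * ‖x‖ := by
  obtain ⟨t, rfl, ht⟩ := exists_coe_eq_abs_eq_norm x
  have hnt : |(n : ℝ) * t| = n * ‖(t : AddCircle L)‖ := by rw [abs_mul, Nat.abs_cast, ht]
  rw [← coe_nsmul, nsmul_eq_mul, ← hnt, norm_coe_eq_abs_iff L hL.out.ne', abs_of_pos hL.out, hnt]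
  exact h

theorem ball_inter_preimage_nsmul_ball {n : ℕ} (hn : 0 < n) {z : AddCircle L} (hz : n • z = z)
    {r : ℝ} (hr : n * r ≤ L / 2) :
    ball z r ∩ (n • ·) ⁻¹' ball z r = ball z (r / n) := by
  have hn1 : (1 : ℝ) ≤ n := Nat.one_le_cast.mpr hn
  ext x
  have hsub : n • x - z = n • (x - z) := by rw [smul_sub, hz]
  simp only [mem_inter_iff, mem_preimage, mem_ball, dist_eq_norm, hsub,
    lt_div_iff₀ (zero_lt_one.trans_le hn1)]
  constructor
  · rintro ⟨hx, hnx⟩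
    have : n * ‖x - z‖ ≤ L / 2 := by nlinarith
    rwa [norm_nsmul_of_mul_norm_le this, mul_comm] at hnx
  · intro hx
    refine ⟨by nlinarith [norm_nonneg (x - z)], ?_⟩
    calc ‖n • (x - z)‖ ≤ n * ‖x - z‖ := norm_nsmul_le
      _ < r := by linarith

theorem volume_ball_s18 (x : AddCircle L) (ε : ℝ) :
    volume (ball x ε) = ENNReal.ofReal (min L (2 * ε)) := by
  rw [← measure_congr closedBall_ae_eq_ball, volume_closedBall]

theorem tendsto_volume_ball_inter_preimage_nsmul_div_volume_ball {n : ℕ} (hn : 0 < n)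
    {z : AddCircle L} (hz : n • z = z) :
    Tendsto (fun r : ℝ => volume (ball z r ∩ (n • ·) ⁻¹' ball z r) / volume (ball z r))
      (nhdsWithin 0 (Ioi 0)) (nhds (1 / n)) := by
  have hL0 := hL.out
  have hn1 : (1 : ℝ) ≤ n := Nat.one_le_cast.mpr hn
  refine tendsto_const_nhds.congr' ?_
  filter_upwards [Ioo_mem_nhdsGT (show (0 : ℝ) < L / (2 * n) by positivity)] with r ⟨hr0, hr⟩
  have hnr : n * r ≤ L / 2 := by rw [lt_div_iff₀ (by positivity)] at hr; linarith
  have h2r : 2 * r ≤ L := by nlinarith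
  have h2rn : 2 * (r / n) ≤ L := h2r.trans' (by gcongr; exact div_le_self hr0.le hn1)
  rw [ball_inter_preimage_nsmul_ball hn hz hnr, volume_ball_s18, volume_ball_s18, min_eq_right h2r,
    min_eq_right h2rn, mul_div_assoc', ENNReal.ofReal_div_of_pos (by positivity),
    ENNReal.ofReal_natCast, ENNReal.div_right_comm,
    ENNReal.div_self (by simpa using hr0) ENNReal.ofReal_ne_top]

end AddCircle

theorem stmt18_general (m : ℕ) (hm : 2 ≤ m)
    (T : UnitAddCircle → UnitAddCircle) (hT : ∀ x, T x = m • x)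
    (z : UnitAddCircle) (p : ℕ) (hz : T^[p] z = z) :
    Tendsto (fun r : ℝ =>
        volume (ball z r ∩ (T^[p]) ⁻¹' ball z r) / volume (ball z r))
      (nhdsWithin 0 (Set.Ioi 0)) (nhds (1 / (m : ℝ≥0∞) ^ p)) := by
  obtain rfl : T = (m • ·) := funext hT
  rw [smul_iterate] at hz ⊢
  exact_mod_cast AddCircle.tendsto_volume_ball_inter_preimage_nsmul_div_volume_ball
    (pow_pos (by omega) p) hz

/-- For `T(x) = m·x mod 1` on the circle and a periodic point `z` with `T^p z = z`,
`lim_{r→0⁺} λ(B(z,r) ∩ T^{-p}(B(z,r)))/λ(B(z,r)) = 1/m^p = 1/|DT^p(z)|`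
(the quantity appearing in the extremal index `θ = 1 − 1/|DT^p(z)|`). -/
theorem stmt18 (m : ℕ) (hm : 2 ≤ m)
    (T : UnitAddCircle → UnitAddCircle) (hT : ∀ x, T x = m • x)
    (z : UnitAddCircle) (p : ℕ) (hp : 1 ≤ p) (hz : T^[p] z = z) :
    Tendsto (fun r : ℝ =>
        volume (ball z r ∩ (T^[p]) ⁻¹' ball z r) / volume (ball z r))
      (nhdsWithin 0 (Set.Ioi 0)) (nhds (1 / (m : ℝ≥0∞) ^ p)) :=
  stmt18_general m hm T hT z p hz
end
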